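/- arXiv:2412.16376 — 4 statements merged into one kernel-verified Lean document; each statement's English description precedes it below -/
import Mathlib

section
/- For every a > 0 and x ∈ (0, π/2], the function y ↦ G_a(x,y) is strictly decreasing on [0, x) and strictly increasing on (x, 2x]; consequently G_a(x,y) ≤ 0 for all y ∈ [0, 2x] \ {x}. -/
open Real

noncomputable def Ga (a x y : ℝ) : ℝ :=
  (1 / (2 * π)) * Real.log
    (((1 + a ^ 2 / x ^ 2) / (1 + a ^ 2 / (x - y) ^ 2)) *
      ((1 + a ^ 2 / (2 * π - x) ^ 2) /
        (1 + a ^ 2 / (x - y + 2 * π * Real.sign (y - x)) ^ 2)))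

noncomputable def Fa (a t : ℝ) : ℝ :=
  (1 + a ^ 2 / t ^ 2) * (1 + a ^ 2 / (2 * π - t) ^ 2)

lemma Fa_pos (a t : ℝ) : 0 < Fa a t := by
  unfold Fa; positivity

lemma Fa_eq (a t : ℝ) (ht : 0 < t) (ht2 : t < 2 * π) :
    Fa a t = (t ^ 2 + a ^ 2) * ((2 * π - t) ^ 2 + a ^ 2) / (t ^ 2 * (2 * π - t) ^ 2) := by
  have h2 : 0 < 2 * π - t := by linarith
  unfold Fa
  field_simp

lemma Fa_anti (a : ℝ) (ha : 0 < a) {u v : ℝ} (hu : 0 < u) (huv : u < v) (hv : v ≤ π) :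
    Fa a v < Fa a u := by
  have hπ := Real.pi_pos
  have hv0 : 0 < v := hu.trans huv
  have h2u : 0 < 2 * π - u := by linarith
  have h2v : 0 < 2 * π - v := by linarith
  have hsum : 0 < 2 * π - u - v := by linarith
  have hd : 0 < v - u := by linarith
  -- P = u(2π-u) < Q = v(2π-v)
  have hPQ : u * (2 * π - u) < v * (2 * π - v) := by nlinarith [mul_pos hd hsum]
  have hP : 0 < u * (2 * π - u) := mul_pos hu h2u
  have h1 : u ^ 2 * (2 * π - u) ^ 2 < v ^ 2 * (2 * π - v) ^ 2 := by
    nlinarith [mul_pos hP (mul_pos hv0 h2v)]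
  have h2 : v ^ 2 + (2 * π - v) ^ 2 < u ^ 2 + (2 * π - u) ^ 2 := by
    nlinarith [mul_pos hd hsum]
  rw [Fa_eq a u hu (by linarith), Fa_eq a v hv0 (by linarith),
    div_lt_div_iff₀ (by positivity) (by positivity)]
  have ha2 : 0 < a ^ 2 := by positivity
  nlinarith [mul_pos (sub_pos.mpr h2) (mul_pos (mul_pos hv0 hv0) (mul_pos h2v h2v)),
    mul_pos (by positivity : (0:ℝ) < v ^ 2 + (2 * π - v) ^ 2) (sub_pos.mpr h1),
    mul_pos ha2 ha2, sq_nonneg a]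

lemma Ga_eq_left (a x y : ℝ) (hy : y < x) :
    Ga a x y = (1 / (2 * π)) * Real.log (Fa a x / Fa a (x - y)) := by
  have hs : Real.sign (y - x) = -1 := Real.sign_of_neg (by linarith)
  unfold Ga Fa
  rw [hs]
  rw [show x - y + 2 * π * (-1) = -(2 * π - (x - y)) by ring, show (-(2 * π - (x - y))) ^ 2 = (2 * π - (x - y)) ^ 2 by ring,
    div_mul_div_comm]

lemma Ga_eq_right (a x y : ℝ) (hy : x < y) :
    Ga a x y = (1 / (2 * π)) * Real.log (Fa a x / Fa a (y - x)) := by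
  have hs : Real.sign (y - x) = 1 := Real.sign_of_pos (by linarith)
  unfold Ga Fa
  rw [hs]
  rw [show x - y + 2 * π * 1 = 2 * π - (y - x) by ring,
    show (x - y) ^ 2 = (y - x) ^ 2 by ring, div_mul_div_comm]

theorem Ga_monotonicity (a x : ℝ) (ha : 0 < a) (hx : x ∈ Set.Ioc 0 (π / 2)) :
    StrictAntiOn (Ga a x) (Set.Ico 0 x) ∧
    StrictMonoOn (Ga a x) (Set.Ioc x (2 * x)) ∧
    (∀ y ∈ Set.Icc 0 (2 * x), y ≠ x → Ga a x y ≤ 0) := by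
  have hπ := Real.pi_pos
  obtain ⟨hx0, hx2⟩ := hx
  have hxπ : x ≤ π := by linarith
  have hc : (0:ℝ) < 1 / (2 * π) := by positivity
  refine ⟨?_, ?_, ?_⟩
  · intro y₁ hy₁ y₂ hy₂ h12
    rw [Ga_eq_left a x y₁ hy₁.2, Ga_eq_left a x y₂ hy₂.2]
    have hu2 : 0 < x - y₂ := by linarith [hy₂.2]
    have hlt : Fa a (x - y₁) < Fa a (x - y₂) :=
      Fa_anti a ha hu2 (by linarith) (by linarith [hy₁.1])
    have : Fa a x / Fa a (x - y₂) < Fa a x / Fa a (x - y₁) :=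
      div_lt_div_of_pos_left (Fa_pos a x) (Fa_pos a _) hlt
    exact mul_lt_mul_of_pos_left (Real.log_lt_log (div_pos (Fa_pos a x) (Fa_pos a _)) this) hc
  · intro y₁ hy₁ y₂ hy₂ h12
    rw [Ga_eq_right a x y₁ hy₁.1, Ga_eq_right a x y₂ hy₂.1]
    have hv1 : 0 < y₁ - x := by linarith [hy₁.1]
    have hlt : Fa a (y₂ - x) < Fa a (y₁ - x) :=
      Fa_anti a ha hv1 (by linarith) (by linarith [hy₂.2])
    have : Fa a x / Fa a (y₁ - x) < Fa a x / Fa a (y₂ - x) :=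
      div_lt_div_of_pos_left (Fa_pos a x) (Fa_pos a _) hlt
    exact mul_lt_mul_of_pos_left (Real.log_lt_log (div_pos (Fa_pos a x) (Fa_pos a _)) this) hc
  · intro y hy hyx
    rcases lt_or_gt_of_ne hyx with h | h
    · rw [Ga_eq_left a x y h]
      have hu : 0 < x - y := by linarith
      have hle : Fa a x ≤ Fa a (x - y) := by
        rcases eq_or_lt_of_le (show x - y ≤ x by linarith [hy.1]) with he | hlt
        · rw [he]
        · exact (Fa_anti a ha hu hlt hxπ).le
      have : Fa a x / Fa a (x - y) ≤ 1 := (div_le_one (Fa_pos a _)).mpr hle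
      have hlog := Real.log_nonpos (div_pos (Fa_pos a x) (Fa_pos a _)).le this
      exact mul_nonpos_of_nonneg_of_nonpos hc.le hlog
    · rw [Ga_eq_right a x y h]
      have hv : 0 < y - x := by linarith
      have hle : Fa a x ≤ Fa a (y - x) := by
        rcases eq_or_lt_of_le (show y - x ≤ x by linarith [hy.2]) with he | hlt
        · rw [he]
        · exact (Fa_anti a ha hv hlt hxπ).le
      have : Fa a x / Fa a (y - x) ≤ 1 := (div_le_one (Fa_pos a _)).mpr hle
      have hlog := Real.log_nonpos (div_pos (Fa_pos a x) (Fa_pos a _)).le this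
      exact mul_nonpos_of_nonneg_of_nonpos hc.le hlog
end

section
/- Fix a > 0 and q ∈ (1, 2). Define D(x) = G_a(x, qx) − G_a(x, x/q), where G_a is as below. Then D(x_*) = 0 at x_* = 2πq/((q+1)(q−1)), and D is strictly decreasing on (0, 2π/(q−1)); in particular G_a(x, qx) ≥ G_a(x, x/q) for all x ∈ (0, π/2]. -/
/-!
Put `ℓ(t) = log (1 + a²/t²)` and `S(t) = ℓ(t) + ℓ(2π - t)`. For `y ≠ x` the sign term makes
`G_a(x, y) = (S(x) - S(|y - x|)) / 2π`, so `D(x) = (S(b/q) - S(b)) / 2π` with `b = (q - 1) x`,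
and `x ∈ (0, 2π/(q - 1))` means `b ∈ (0, 2π)`. As `S(2π - t) = S(t)` and `2π - b/q = b` at
`b = 2πq/(q + 1)`, the difference vanishes at `x_*`. With `ℓ' = -r`, `r(t) = 2a²/(t(t² + a²))`,
the derivative of `S(b/q) - S(b)` is `(r(b) - r(b/q)/q) + (r(2π - b/q)/q - r(2π - b))`; the first
bracket is negative because `t ↦ t r(t)` decreases, the second because `r` decreases and `q > 1`.
Finally `π/2 < x_*` for `q < 2`.
-/

open Real

open Set

noncomputable def logFactor (a t : ℝ) : ℝ := log (1 + a ^ 2 / t ^ 2)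

noncomputable def logFactorSym (a t : ℝ) : ℝ := logFactor a t + logFactor a (2 * π - t)

noncomputable def logFactorRate (a t : ℝ) : ℝ := 2 * a ^ 2 / (t * (t ^ 2 + a ^ 2))

noncomputable def logFactorGap (a q b : ℝ) : ℝ := logFactorSym a (b / q) - logFactorSym a b

section

variable {a q t u v : ℝ}

lemma logFactorSym_two_pi_sub (a t : ℝ) : logFactorSym a (2 * π - t) = logFactorSym a t := by
  rw [logFactorSym, logFactorSym, sub_sub_cancel, add_comm]

lemma Ga_eq_logFactorSym {x y : ℝ} (hxy : y ≠ x) :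
    Ga a x y = (logFactorSym a x - logFactorSym a |y - x|) / (2 * π) := by
  have hsign : (x - y + 2 * π * Real.sign (y - x)) ^ 2 = (2 * π - |y - x|) ^ 2 := by
    rcases lt_or_gt_of_ne hxy with h | h
    · rw [Real.sign_of_neg (sub_neg.2 h), abs_of_neg (sub_neg.2 h)]
      ring
    · rw [Real.sign_of_pos (sub_pos.2 h), abs_of_pos (sub_pos.2 h)]
      ring
  have hsq : (x - y) ^ 2 = |y - x| ^ 2 := by rw [sq_abs]; ring
  rw [Ga, hsign, hsq, log_mul (by positivity) (by positivity),
    log_div (by positivity) (by positivity), log_div (by positivity) (by positivity)]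
  simp only [logFactorSym, logFactor]
  ring

lemma hasDerivAt_logFactor (ht : t ≠ 0) : HasDerivAt (logFactor a) (-logFactorRate a t) t := by
  have h : HasDerivAt (fun s => 1 + a ^ 2 / s ^ 2) (-(2 * a ^ 2 * t) / (t ^ 2) ^ 2) t := by
    refine (((hasDerivAt_const t (a ^ 2)).div (hasDerivAt_pow 2 t) (pow_ne_zero 2 ht)).const_add 1
      ).congr_deriv ?_
    simp only [zero_mul, Nat.cast_ofNat, Nat.add_one_sub_one, pow_one, zero_sub]
    ring
  refine (h.log (by positivity)).congr_deriv ?_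
  rw [logFactorRate]
  field_simp

lemma hasDerivAt_logFactorSym (ht : t ≠ 0) (ht' : t ≠ 2 * π) :
    HasDerivAt (logFactorSym a) (-logFactorRate a t + logFactorRate a (2 * π - t)) t := by
  have h := (hasDerivAt_logFactor (a := a) (sub_ne_zero.2 ht'.symm)).comp t
    ((hasDerivAt_id t).const_sub (2 * π))
  exact ((hasDerivAt_logFactor ht).add h).congr_deriv (by ring)

lemma logFactorRate_lt_of_lt (ha : a ≠ 0) (hu : 0 < u) (huv : u < v) :
    logFactorRate a v < logFactorRate a u := by
  have hv : 0 < v := hu.trans huv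
  unfold logFactorRate
  gcongr

lemma logFactorRate_lt_div (ha : a ≠ 0) (hq : 1 < q) (ht : 0 < t) :
    logFactorRate a t < logFactorRate a (t / q) / q := by
  have hq0 : 0 < q := zero_lt_one.trans hq
  have e : logFactorRate a (t / q) / q = 2 * a ^ 2 / (t * ((t / q) ^ 2 + a ^ 2)) := by
    unfold logFactorRate
    field_simp
  rw [e, logFactorRate]
  gcongr
  exact div_lt_self ht hq

lemma hasDerivAt_logFactorGap (hq : 1 < q) {b : ℝ} (hb : b ∈ Ioo 0 (2 * π)) :
    HasDerivAt (logFactorGap a q)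
      ((-logFactorRate a (b / q) + logFactorRate a (2 * π - b / q)) / q -
        (-logFactorRate a b + logFactorRate a (2 * π - b))) b := by
  have hbq : b / q < b := div_lt_self hb.1 hq
  have hdiv := (hasDerivAt_id' b).div_const q
  have h := (hasDerivAt_logFactorSym (a := a) (t := b / q) (div_pos hb.1 (by linarith)).ne'
    (by linarith [hb.2])).comp b hdiv
  exact (h.sub (hasDerivAt_logFactorSym hb.1.ne' hb.2.ne)).congr_deriv (by ring)

lemma strictAntiOn_logFactorGap (ha : a ≠ 0) (hq : 1 < q) :
    StrictAntiOn (logFactorGap a q) (Ioo 0 (2 * π)) := by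
  refine strictAntiOn_of_hasDerivWithinAt_neg (convex_Ioo _ _)
    (fun b hb => (hasDerivAt_logFactorGap hq hb).continuousAt.continuousWithinAt)
    (fun b hb => (hasDerivAt_logFactorGap hq (interior_subset hb)).hasDerivWithinAt) ?_
  intro b hb
  rw [interior_Ioo] at hb
  have hbq : b / q < b := div_lt_self hb.1 hq
  have hfar : 0 < 2 * π - b / q := by linarith [hb.2]
  have near := logFactorRate_lt_div ha hq hb.1
  have far : logFactorRate a (2 * π - b / q) / q < logFactorRate a (2 * π - b) :=
    calc logFactorRate a (2 * π - b / q) / q < logFactorRate a (2 * π - b / q) :=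
          div_lt_self (by unfold logFactorRate; positivity) hq
      _ < logFactorRate a (2 * π - b) :=
          logFactorRate_lt_of_lt ha (by linarith [hb.2]) (by linarith)
  rw [add_div, neg_div]
  linarith

lemma logFactorGap_two_pi_mul_div_add_one (a : ℝ) (hq : 0 < q) :
    logFactorGap a q (2 * π * q / (q + 1)) = 0 := by
  have hsym : 2 * π * q / (q + 1) / q = 2 * π - 2 * π * q / (q + 1) := by
    field_simp
    ring
  rw [logFactorGap, hsym, logFactorSym_two_pi_sub, sub_self]

lemma Ga_sub_eq_logFactorGap (hq : 1 < q) {x : ℝ} (hx : 0 < x) :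
    Ga a x (q * x) - Ga a x (x / q) = logFactorGap a q ((q - 1) * x) / (2 * π) := by
  have hq0 : 0 < q := by linarith
  have hbig : |q * x - x| = (q - 1) * x := by
    rw [abs_of_pos (by nlinarith)]; ring
  have hsmall : |x / q - x| = (q - 1) * x / q := by
    rw [abs_of_neg (by linarith [div_lt_self hx hq])]; field_simp; ring
  rw [Ga_eq_logFactorSym (by nlinarith), Ga_eq_logFactorSym (by linarith [div_lt_self hx hq]),
    hbig, hsmall, logFactorGap]
  ring

lemma strictAntiOn_Ga_sub (ha : a ≠ 0) (hq : 1 < q) :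
    StrictAntiOn (fun x => Ga a x (q * x) - Ga a x (x / q)) (Ioo 0 (2 * π / (q - 1))) := by
  have hq1 : 0 < q - 1 := sub_pos.2 hq
  have hmaps : MapsTo (fun x => (q - 1) * x) (Ioo 0 (2 * π / (q - 1))) (Ioo 0 (2 * π)) :=
    fun x hx => ⟨mul_pos hq1 hx.1, by rw [← lt_div_iff₀' hq1]; exact hx.2⟩
  intro x hx y hy hxy
  simp only [Ga_sub_eq_logFactorGap hq hx.1, Ga_sub_eq_logFactorGap hq hy.1]
  exact div_lt_div_of_pos_right (strictAntiOn_logFactorGap ha hq (hmaps hx) (hmaps hy)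
    (mul_lt_mul_of_pos_left hxy hq1)) two_pi_pos

end

theorem Ga_difference_monotone (a q : ℝ) (ha : 0 < a) (hq : q ∈ Set.Ioo 1 2) :
    (Ga a (2 * π * q / ((q + 1) * (q - 1))) (q * (2 * π * q / ((q + 1) * (q - 1)))) -
      Ga a (2 * π * q / ((q + 1) * (q - 1))) ((2 * π * q / ((q + 1) * (q - 1))) / q) = 0) ∧
    StrictAntiOn (fun x => Ga a x (q * x) - Ga a x (x / q)) (Set.Ioo 0 (2 * π / (q - 1))) ∧
    (∀ x ∈ Set.Ioc 0 (π / 2), Ga a x (x / q) ≤ Ga a x (q * x)) := by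
  obtain ⟨hq1, hq2⟩ := hq
  have hq1' : 0 < q - 1 := sub_pos.2 hq1
  have hanti := strictAntiOn_Ga_sub ha.ne' hq1
  set xs := 2 * π * q / ((q + 1) * (q - 1))
  have hxs : (q - 1) * xs = 2 * π * q / (q + 1) := by
    simp only [xs]; field_simp
  have hzero : Ga a xs (q * xs) - Ga a xs (xs / q) = 0 := by
    rw [Ga_sub_eq_logFactorGap hq1 (by positivity), hxs,
      logFactorGap_two_pi_mul_div_add_one a (by linarith), zero_div]
  have hxs_mem : xs ∈ Ioo 0 (2 * π / (q - 1)) :=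
    ⟨by positivity, by rw [div_lt_div_iff₀ (by positivity) hq1']; nlinarith [pi_pos]⟩
  have hxs_gt : π / 2 < xs := by
    rw [lt_div_iff₀ (by positivity)]
    nlinarith [mul_pos pi_pos (by nlinarith : 0 < 4 * q - (q + 1) * (q - 1))]
  refine ⟨hzero, hanti, fun x hx => ?_⟩
  have hx_lt : x < xs := hx.2.trans_lt hxs_gt
  have := hanti ⟨hx.1, hx_lt.trans hxs_mem.2⟩ hxs_mem hx_lt
  linarith
end

section
/- Fix a > 0 and q ∈ (1,2). The function x ↦ −G_a(x, qx) is strictly decreasing on (0, 2π/q] and vanishes at x = 2π/q; in particular −G_a(π/2, qπ/2) > 0. -/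
open Real

/-!
With `c = q - 1 ∈ (0, 1)` and `g t = log (1 + a²/t²)`, for `x > 0` one has
`-2π G_a(x, qx) = g(cx) - g(x) + g(2π - cx) - g(2π - x)`.
Since `-g'(t) = 2a²/(t(t² + a²))` is decreasing in `t` and so is `-t g'(t) = 2a²/(t² + a²)`,
both differences have negative derivative on `(0, 2π)`. At `x = 2π/q` one has `cx = 2π - x`,
so the four terms cancel, and `π/2 < 2π/q` gives the sign at `π/2`.
-/

namespace Ga

noncomputable def logOneAddSqDivSq (a t : ℝ) : ℝ := log (1 + a ^ 2 / t ^ 2)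

noncomputable def diagScaled (a c x : ℝ) : ℝ :=
  logOneAddSqDivSq a (c * x) - logOneAddSqDivSq a x +
    (logOneAddSqDivSq a (2 * π - c * x) - logOneAddSqDivSq a (2 * π - x))

lemma one_add_sq_div_sq_pos (a t : ℝ) : 0 < 1 + a ^ 2 / t ^ 2 := by positivity

theorem neg_eq_diagScaled (a : ℝ) {q x : ℝ} (hq : 1 < q) (hx : 0 < x) :
    -Ga a x (q * x) = diagScaled a (q - 1) x / (2 * π) := by
  have hsign : Real.sign (q * x - x) = 1 := Real.sign_of_pos (by nlinarith)
  have h₁ : (x - q * x) ^ 2 = ((q - 1) * x) ^ 2 := by ring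
  have h₂ : x - q * x + 2 * π * Real.sign (q * x - x) = 2 * π - (q - 1) * x := by
    rw [hsign]; ring
  have hpos := one_add_sq_div_sq_pos a
  rw [Ga, h₁, h₂, log_mul (by positivity) (by positivity), log_div (hpos _).ne' (hpos _).ne',
    log_div (hpos _).ne' (hpos _).ne', diagScaled]
  simp only [logOneAddSqDivSq]
  ring

noncomputable def negDeriv (a t : ℝ) : ℝ := 2 * a ^ 2 / (t * (t ^ 2 + a ^ 2))

lemma hasDerivAt_logOneAddSqDivSq (a : ℝ) {t : ℝ} (ht : t ≠ 0) :
    HasDerivAt (logOneAddSqDivSq a) (-negDeriv a t) t := by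
  have hdiv := (hasDerivAt_const t (a ^ 2)).div (hasDerivAt_pow 2 t) (pow_ne_zero 2 ht)
  have h := (hdiv.const_add 1).log (one_add_sq_div_sq_pos a t).ne'
  convert h using 1
  · rfl
  · simp only [negDeriv, Pi.div_apply]
    field_simp
    ring

lemma negDeriv_lt_mul_negDeriv_mul {a c x : ℝ} (ha : a ≠ 0) (hc₀ : 0 < c) (hc₁ : c < 1)
    (hx : 0 < x) : negDeriv a x < c * negDeriv a (c * x) := by
  have h : c * negDeriv a (c * x) = 2 * a ^ 2 / (x * ((c * x) ^ 2 + a ^ 2)) := by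
    simp only [negDeriv]
    field_simp
  rw [h, negDeriv]
  gcongr
  nlinarith [mul_pos hc₀ hx]

lemma mul_negDeriv_lt_negDeriv {a c u v : ℝ} (ha : a ≠ 0) (hc : c ≤ 1) (hu : 0 < u)
    (huv : u < v) : c * negDeriv a v < negDeriv a u := calc
  c * negDeriv a v ≤ negDeriv a v :=
    mul_le_of_le_one_left (by have := hu.trans huv; unfold negDeriv; positivity) hc
  _ < negDeriv a u := by unfold negDeriv; gcongr

lemma hasDerivAt_diagScaled (a : ℝ) {c x : ℝ} (hc : c ≠ 0) (hx : x ≠ 0)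
    (hcx : 2 * π - c * x ≠ 0) (hx' : 2 * π - x ≠ 0) :
    HasDerivAt (diagScaled a c)
      (negDeriv a x - c * negDeriv a (c * x) +
        (c * negDeriv a (2 * π - c * x) - negDeriv a (2 * π - x))) x := by
  have hlin : HasDerivAt (fun x => c * x) c x := by simpa using (hasDerivAt_id x).const_mul c
  have h₁ := (hasDerivAt_logOneAddSqDivSq a (mul_ne_zero hc hx)).comp x hlin
  have h₂ := hasDerivAt_logOneAddSqDivSq a hx
  have h₃ := (hasDerivAt_logOneAddSqDivSq a hcx).comp x (hlin.const_sub (2 * π))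
  have h₄ := (hasDerivAt_logOneAddSqDivSq a hx').comp x ((hasDerivAt_id x).const_sub (2 * π))
  exact ((h₁.sub h₂).add (h₃.sub h₄)).congr_deriv (by ring)

theorem strictAntiOn_diagScaled {a c : ℝ} (ha : a ≠ 0) (hc₀ : 0 < c) (hc₁ : c < 1) :
    StrictAntiOn (diagScaled a c) (Set.Ioo 0 (2 * π)) := by
  have hderiv : ∀ x ∈ Set.Ioo 0 (2 * π), HasDerivAt (diagScaled a c)
      (negDeriv a x - c * negDeriv a (c * x) +
        (c * negDeriv a (2 * π - c * x) - negDeriv a (2 * π - x))) x := fun x ⟨hx₀, hx⟩ ↦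
    hasDerivAt_diagScaled a hc₀.ne' hx₀.ne' (by nlinarith) (by linarith)
  refine strictAntiOn_of_deriv_neg (convex_Ioo 0 (2 * π))
    (fun x hx ↦ (hderiv x hx).continuousAt.continuousWithinAt) fun x hx ↦ ?_
  rw [interior_Ioo] at hx
  obtain ⟨hx₀, hx⟩ := hx
  rw [(hderiv x ⟨hx₀, hx⟩).deriv]
  have h₁ := negDeriv_lt_mul_negDeriv_mul ha hc₀ hc₁ hx₀
  have h₂ : c * negDeriv a (2 * π - c * x) < negDeriv a (2 * π - x) :=
    mul_negDeriv_lt_negDeriv ha hc₁.le (sub_pos.2 hx) (by nlinarith)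
  linarith

theorem diagScaled_eq_zero (a : ℝ) {c x : ℝ} (h : c * x + x = 2 * π) :
    diagScaled a c x = 0 := by
  rw [diagScaled, show 2 * π - c * x = x by linarith, show 2 * π - x = c * x by linarith]
  ring

end Ga

theorem neg_Ga_strictAnti (a q : ℝ) (ha : 0 < a) (hq : q ∈ Set.Ioo 1 2) :
    StrictAntiOn (fun x => -Ga a x (q * x)) (Set.Ioc 0 (2 * π / q)) ∧
    -Ga a (2 * π / q) (q * (2 * π / q)) = 0 ∧
    0 < -Ga a (π / 2) (q * (π / 2)) := by
  obtain ⟨hq₁, hq₂⟩ := hq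
  have hq₀ : 0 < q := by linarith
  have hscaled : ∀ x ∈ Set.Ioc 0 (2 * π / q),
      -Ga a x (q * x) = Ga.diagScaled a (q - 1) x / (2 * π) :=
    fun x hx ↦ Ga.neg_eq_diagScaled a hq₁ hx.1
  have hsub : Set.Ioc 0 (2 * π / q) ⊆ Set.Ioo 0 (2 * π) := fun x hx ↦
    ⟨hx.1, hx.2.trans_lt (div_lt_self (by positivity) hq₁)⟩
  have hanti : StrictAntiOn (fun x => -Ga a x (q * x)) (Set.Ioc 0 (2 * π / q)) := by
    intro x hx y hy hxy
    dsimp only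
    rw [hscaled x hx, hscaled y hy]
    gcongr
    exact Ga.strictAntiOn_diagScaled ha.ne' (by linarith) (by linarith) (hsub hx) (hsub hy) hxy
  have hend : 2 * π / q ∈ Set.Ioc 0 (2 * π / q) := ⟨by positivity, le_rfl⟩
  have hzero : -Ga a (2 * π / q) (q * (2 * π / q)) = 0 := by
    rw [hscaled _ hend, Ga.diagScaled_eq_zero a (by field_simp; ring), zero_div]
  have hhalf : π / 2 ∈ Set.Ioc 0 (2 * π / q) :=
    ⟨by positivity, by rw [le_div_iff₀ hq₀]; nlinarith [pi_pos]⟩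
  refine ⟨hanti, hzero, ?_⟩
  simpa [hzero] using hanti hhalf hend (by rw [lt_div_iff₀ hq₀]; nlinarith [pi_pos])
end

section
/- Let σ > 0, q ∈ (1,2), and let f : [0, qπ/2] → ℝ be continuously differentiable, nonnegative, with f(0) = 0 and f' ≥ 0 on [0, qπ/2]. Then ∫₀^{π/2} (f(qx) − f(x/q)) f'(x) / x^σ dx ≥ C̃_{q,σ} ∫₀^{π/2} f(x)² / x^{1+σ} dx for a constant C̃_{q,σ} > 0 depending only on q and σ (interpreted as: if the right side is infinite, so is the left). -/
/-!
Write `g x = f x - f (x / q)`. Since `f 0 = 0`, `f x = ∑ₖ g (x / qᵏ)`, and the measure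
`x^{-1-σ} dx` scales by `c^{-σ}` under `x ↦ x / c`; Cauchy–Schwarz with the geometric weights
`T^k`, `T = q^{-σ/2}`, then gives the Hardy-type bound
`(1 - T)² ∫ f² x^{-1-σ} ≤ ∫ g² x^{-1-σ}`.

On the other hand `(g² / (2 x^σ))' = g g' x^{-σ} - (σ/2) g² x^{-1-σ}`, and since `f` is
nondecreasing, `0 ≤ g ≤ f (q x) - f (x / q)` and `g' ≤ f'`. Integrating over `[ε, π/2]`, the
boundary term at `ε` is at most `g(ε)² ε^{-σ} = ε^{-σ} g(ε) ∫_{ε/q}^{ε} f'`, which is bounded by the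
integral of `(f (q x) - f (x / q)) f'(x) x^{-σ}` over `[ε/q, ε]`. Letting `ε → 0` gives
`(σ/2) ∫ g² x^{-1-σ} ≤ ∫ (f (q x) - f (x / q)) f'(x) x^{-σ}`, so `C = (σ/2) (1 - T)²` works.
-/

open Real MeasureTheory Set Filter
open scoped ENNReal Topology

lemma DifferentiableOn.exists_continuous_eqOn_hasDerivAt {f : ℝ → ℝ} {a b : ℝ} (hab : a ≤ b)
    (hf : DifferentiableOn ℝ f (Icc a b)) :
    ∃ F : ℝ → ℝ, Continuous F ∧ EqOn F f (Icc a b) ∧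
      ∀ x ∈ Ioo a b, HasDerivAt F (derivWithin f (Icc a b) x) x := by
  have hFf : EqOn (fun x => f (projIcc a b hab x)) f (Icc a b) := fun x hx => by
    simp only [projIcc_of_mem hab hx]
  refine ⟨_, hf.continuousOn.comp_continuous (continuous_subtype_val.comp continuous_projIcc)
    fun x => (projIcc a b hab x).2, hFf, fun x hx => ?_⟩
  have hnhds := Icc_mem_nhds hx.1 hx.2
  rw [derivWithin_of_mem_nhds hnhds]
  exact (hf.differentiableAt hnhds).hasDerivAt.congr_of_eventuallyEq
    (eventuallyEq_of_mem hnhds hFf)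

lemma ofReal_intervalIntegral_eq_setLIntegral {F : ℝ → ℝ} {a b : ℝ} (hab : a ≤ b)
    (hF : ContinuousOn F (Icc a b)) (hF0 : ∀ x ∈ Ioc a b, 0 ≤ F x) :
    ENNReal.ofReal (∫ x in a..b, F x) = ∫⁻ x in Ioc a b, ENNReal.ofReal (F x) := by
  rw [intervalIntegral.integral_of_le hab]
  exact ofReal_integral_eq_lintegral_ofReal (hF.integrableOn_Icc.mono_set Ioc_subset_Icc_self)
    (ae_restrict_of_forall_mem measurableSet_Ioc hF0)

lemma setLIntegral_Ioc_le_of_forall_pos {F : ℝ → ℝ≥0∞} {a : ℝ} {C : ℝ≥0∞}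
    (h : ∀ ε ∈ Ioc 0 a, ∫⁻ x in Ioc ε a, F x ≤ C) : ∫⁻ x in Ioc 0 a, F x ≤ C := by
  rcases le_or_gt a 0 with ha | ha
  · simp [Ioc_eq_empty_of_le ha]
  have hcover : Ioc 0 a ⊆ ⋃ n : ℕ, Ioc (a / (n + 1)) a := by
    rintro x ⟨hx0, hxa⟩
    obtain ⟨n, hn⟩ := exists_nat_gt (a / x)
    refine mem_iUnion.2 ⟨n, ?_, hxa⟩
    rw [div_lt_iff₀ hx0] at hn
    rw [div_lt_iff₀ (by positivity)]
    nlinarith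
  have hmono : Monotone fun n : ℕ => Ioc (a / (n + 1)) a := fun m n hmn =>
    Ioc_subset_Ioc_left (div_le_div_of_nonneg_left ha.le (by positivity) (by gcongr))
  calc ∫⁻ x in Ioc 0 a, F x ≤ ∫⁻ x in ⋃ n : ℕ, Ioc (a / (n + 1)) a, F x :=
        lintegral_mono_set hcover
    _ = ⨆ n : ℕ, ∫⁻ x in Ioc (a / (n + 1)) a, F x :=
        setLIntegral_iUnion_of_directed _ hmono.directed_le
    _ ≤ C := iSup_le fun n =>
        h _ ⟨by positivity, div_le_self ha.le (by linarith [n.cast_nonneg (α := ℝ)])⟩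

lemma setLIntegral_sq_comp_div_div_rpow_le (h : ℝ → ℝ) {a c : ℝ} (σ : ℝ) (hc : 1 ≤ c) :
    ∫⁻ x in Ioc 0 a, ENNReal.ofReal (h (x / c) ^ 2 / x ^ (1 + σ)) ≤
      ENNReal.ofReal (c ^ (-σ)) * ∫⁻ x in Ioc 0 a, ENNReal.ofReal (h x ^ 2 / x ^ (1 + σ)) := by
  have hc0 : 0 < c := by linarith
  have himage : (fun u => c * u) '' Ioc 0 (a / c) = Ioc 0 a := by
    rw [image_mul_left_Ioc hc0, mul_zero, mul_div_cancel₀ _ hc0.ne']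
  have hsub : Ioc 0 (a / c) ⊆ Ioc 0 a := fun x hx =>
    ⟨hx.1, hx.2.trans (div_le_self ((div_pos_iff_of_pos_right hc0).1 (hx.1.trans_le hx.2)).le hc)⟩
  calc ∫⁻ x in Ioc 0 a, ENNReal.ofReal (h (x / c) ^ 2 / x ^ (1 + σ))
      = ∫⁻ u in Ioc 0 (a / c),
          ENNReal.ofReal |c| * ENNReal.ofReal (h (c * u / c) ^ 2 / (c * u) ^ (1 + σ)) := by
        rw [← himage]
        exact lintegral_image_eq_lintegral_abs_deriv_mul measurableSet_Ioc
          (fun u _ => ((hasDerivAt_id u).const_mul c).hasDerivWithinAt.congr_deriv (mul_one c))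
          (mul_right_injective₀ hc0.ne').injOn _
    _ = ENNReal.ofReal (c ^ (-σ)) *
          ∫⁻ u in Ioc 0 (a / c), ENNReal.ofReal (h u ^ 2 / u ^ (1 + σ)) := by
        rw [← lintegral_const_mul' _ _ ENNReal.ofReal_ne_top]
        refine setLIntegral_congr_fun measurableSet_Ioc fun u hu => ?_
        rw [← ENNReal.ofReal_mul (abs_nonneg c), ← ENNReal.ofReal_mul (by positivity),
          abs_of_pos hc0, mul_div_cancel_left₀ _ hc0.ne', mul_rpow hc0.le hu.1.le,
          rpow_add hc0, rpow_one, rpow_neg hc0.le]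
        field_simp
    _ ≤ _ := by gcongr

lemma ofReal_inv_pow_mul_setLIntegral_sq_comp_div_pow_le (h : ℝ → ℝ) (a : ℝ) {q σ : ℝ}
    (hq : 1 < q) (k : ℕ) :
    ENNReal.ofReal ((q ^ (-(σ / 2)))⁻¹ ^ k) *
        ∫⁻ x in Ioc 0 a, ENNReal.ofReal (h (x / q ^ k) ^ 2 / x ^ (1 + σ)) ≤
      ENNReal.ofReal (q ^ (-(σ / 2))) ^ k *
        ∫⁻ x in Ioc 0 a, ENNReal.ofReal (h x ^ 2 / x ^ (1 + σ)) := by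
  set T := q ^ (-(σ / 2))
  have hq0 : 0 < q := by linarith
  have hT0 : 0 < T := rpow_pos_of_pos hq0 _
  have hscale : T⁻¹ ^ k * (q ^ k) ^ (-σ) = T ^ k := by
    have hT2 : q ^ (-σ) = T ^ 2 := by
      rw [← rpow_natCast, ← rpow_mul hq0.le]
      norm_num
    rw [← rpow_pow_comm hq0.le, hT2, ← mul_pow, sq, inv_mul_cancel_left₀ hT0.ne']
  calc _ ≤ ENNReal.ofReal (T⁻¹ ^ k) * (ENNReal.ofReal ((q ^ k) ^ (-σ)) *
        ∫⁻ x in Ioc 0 a, ENNReal.ofReal (h x ^ 2 / x ^ (1 + σ))) := by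
        gcongr
        exact setLIntegral_sq_comp_div_div_rpow_le h σ (one_le_pow₀ hq.le)
    _ = _ := by
        rw [← mul_assoc, ← ENNReal.ofReal_mul (by positivity), hscale, ENNReal.ofReal_pow hT0.le]

lemma ofReal_mul_sq_le_tsum_sq_sub {u : ℕ → ℝ} (hu : Tendsto u atTop (𝓝 0)) {T : ℝ}
    (hT0 : 0 < T) (hT1 : T < 1) :
    ENNReal.ofReal ((1 - T) * u 0 ^ 2) ≤
      ∑' k, ENNReal.ofReal (T⁻¹ ^ k * (u k - u (k + 1)) ^ 2) := by
  have hpartial : ∀ n : ℕ, (1 - T) * (u 0 - u n) ^ 2 ≤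
      ∑ k ∈ Finset.range n, T⁻¹ ^ k * (u k - u (k + 1)) ^ 2 := by
    intro n
    rcases n.eq_zero_or_pos with rfl | hn
    · simp
    have hgeom : 0 < ∑ k ∈ Finset.range n, T ^ k := geom_sum_pos hT0.le hn.ne'
    calc (1 - T) * (u 0 - u n) ^ 2
        = ((∑ k ∈ Finset.range n, T ^ k) * (1 - T)) *
            ((∑ k ∈ Finset.range n, (u k - u (k + 1))) ^ 2 / ∑ k ∈ Finset.range n, T ^ k) := by
          rw [Finset.sum_range_sub']
          field_simp
      _ ≤ 1 * ((∑ k ∈ Finset.range n, (u k - u (k + 1))) ^ 2 / ∑ k ∈ Finset.range n, T ^ k) := by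
          gcongr
          rw [geom_sum_mul_of_le_one hT1.le]
          linarith [pow_pos hT0 n]
      _ ≤ ∑ k ∈ Finset.range n, T⁻¹ ^ k * (u k - u (k + 1)) ^ 2 := by
          rw [one_mul]
          refine (Finset.sq_sum_div_le_sum_sq_div _ _ fun k _ => pow_pos hT0 k).trans_eq ?_
          simp only [inv_pow, div_eq_inv_mul]
  have hlim : Tendsto (fun n => ENNReal.ofReal ((1 - T) * (u 0 - u n) ^ 2)) atTop
      (𝓝 (ENNReal.ofReal ((1 - T) * u 0 ^ 2))) := by
    refine (ENNReal.continuous_ofReal.tendsto _).comp ?_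
    simpa using ((tendsto_const_nhds (x := u 0)).sub hu).pow 2 |>.const_mul (1 - T)
  refine le_of_tendsto' hlim fun n => ?_
  calc ENNReal.ofReal ((1 - T) * (u 0 - u n) ^ 2)
      ≤ ENNReal.ofReal (∑ k ∈ Finset.range n, T⁻¹ ^ k * (u k - u (k + 1)) ^ 2) :=
        ENNReal.ofReal_le_ofReal (hpartial n)
    _ = ∑ k ∈ Finset.range n, ENNReal.ofReal (T⁻¹ ^ k * (u k - u (k + 1)) ^ 2) :=
        ENNReal.ofReal_sum_of_nonneg fun k _ => by positivity
    _ ≤ _ := ENNReal.sum_le_tsum _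

lemma ofReal_mul_sq_div_rpow_le_tsum {f : ℝ → ℝ} {q T s x : ℝ} (hq : 1 < q)
    (hf : ContinuousAt f 0) (hf0 : f 0 = 0) (hT0 : 0 < T) (hT1 : T < 1) (hx : 0 < x) :
    ENNReal.ofReal ((1 - T) * (f x ^ 2 / x ^ s)) ≤
      ∑' k : ℕ, ENNReal.ofReal (T⁻¹ ^ k) *
        ENNReal.ofReal ((f (x / q ^ k) - f (x / q ^ k / q)) ^ 2 / x ^ s) := by
  have hxs : 0 < x ^ s := rpow_pos_of_pos hx s
  have hu : Tendsto (fun k : ℕ => f (x / q ^ k)) atTop (𝓝 0) := by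
    rw [← hf0]
    refine hf.tendsto.comp ?_
    simpa [div_eq_mul_inv] using
      (tendsto_pow_atTop_atTop_of_one_lt hq).inv_tendsto_atTop.const_mul x
  have hseq := ofReal_mul_sq_le_tsum_sq_sub hu hT0 hT1
  simp only [pow_zero, div_one, div_div, ← pow_succ] at hseq ⊢
  calc ENNReal.ofReal ((1 - T) * (f x ^ 2 / x ^ s))
      = ENNReal.ofReal ((1 - T) * f x ^ 2) / ENNReal.ofReal (x ^ s) := by
        rw [← mul_div_assoc, ENNReal.ofReal_div_of_pos hxs]
    _ ≤ (∑' k : ℕ, ENNReal.ofReal (T⁻¹ ^ k * (f (x / q ^ k) - f (x / q ^ (k + 1))) ^ 2)) /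
          ENNReal.ofReal (x ^ s) := by gcongr
    _ = _ := by
        simp only [div_eq_mul_inv, ← ENNReal.tsum_mul_right]
        congr 1 with k
        rw [ENNReal.ofReal_mul (by positivity), ENNReal.ofReal_mul (sq_nonneg _),
          ENNReal.ofReal_inv_of_pos hxs, mul_assoc]

theorem ofReal_sq_mul_setLIntegral_sq_div_rpow_le_sq_sub {f : ℝ → ℝ} {q σ : ℝ} (a : ℝ) (hq : 1 < q)
    (hσ : 0 < σ) (hf : Continuous f) (hf0 : f 0 = 0) :
    ENNReal.ofReal ((1 - q ^ (-(σ / 2))) ^ 2) *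
        ∫⁻ x in Ioc 0 a, ENNReal.ofReal (f x ^ 2 / x ^ (1 + σ)) ≤
      ∫⁻ x in Ioc 0 a, ENNReal.ofReal ((f x - f (x / q)) ^ 2 / x ^ (1 + σ)) := by
  set T := q ^ (-(σ / 2))
  have hT0 : 0 < T := rpow_pos_of_pos (by linarith) _
  have hT1 : T < 1 := rpow_lt_one_of_one_lt_of_neg hq (by linarith)
  set G := ∫⁻ x in Ioc 0 a, ENNReal.ofReal ((f x - f (x / q)) ^ 2 / x ^ (1 + σ))
  have hmain : ENNReal.ofReal (1 - T) * ∫⁻ x in Ioc 0 a, ENNReal.ofReal (f x ^ 2 / x ^ (1 + σ)) ≤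
      (1 - ENNReal.ofReal T)⁻¹ * G :=
    calc _ = ∫⁻ x in Ioc 0 a, ENNReal.ofReal ((1 - T) * (f x ^ 2 / x ^ (1 + σ))) := by
          rw [← lintegral_const_mul' _ _ ENNReal.ofReal_ne_top]
          simp only [ENNReal.ofReal_mul (sub_pos.2 hT1).le]
      _ ≤ ∫⁻ x in Ioc 0 a, ∑' k : ℕ, ENNReal.ofReal (T⁻¹ ^ k) *
            ENNReal.ofReal ((f (x / q ^ k) - f (x / q ^ k / q)) ^ 2 / x ^ (1 + σ)) :=
          setLIntegral_mono' measurableSet_Ioc fun x hx =>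
            ofReal_mul_sq_div_rpow_le_tsum hq hf.continuousAt hf0 hT0 hT1 hx.1
      _ = ∑' k : ℕ, ENNReal.ofReal (T⁻¹ ^ k) * ∫⁻ x in Ioc 0 a,
            ENNReal.ofReal ((f (x / q ^ k) - f (x / q ^ k / q)) ^ 2 / x ^ (1 + σ)) := by
          rw [lintegral_tsum fun k => by fun_prop]
          simp only [lintegral_const_mul' _ _ ENNReal.ofReal_ne_top]
      _ ≤ ∑' k : ℕ, ENNReal.ofReal T ^ k * G := ENNReal.tsum_le_tsum fun k =>
          ofReal_inv_pow_mul_setLIntegral_sq_comp_div_pow_le (fun y => f y - f (y / q)) a hq k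
      _ = (1 - ENNReal.ofReal T)⁻¹ * G := by rw [ENNReal.tsum_mul_right, ENNReal.tsum_geometric]
  have hinv : ENNReal.ofReal (1 - T) * (1 - ENNReal.ofReal T)⁻¹ = 1 := by
    rw [ENNReal.ofReal_sub _ hT0.le, ENNReal.ofReal_one]
    exact ENNReal.mul_inv_cancel (tsub_pos_of_lt (ENNReal.ofReal_lt_one.2 hT1)).ne' (by simp)
  calc _ = ENNReal.ofReal (1 - T) *
        (ENNReal.ofReal (1 - T) * ∫⁻ x in Ioc 0 a, ENNReal.ofReal (f x ^ 2 / x ^ (1 + σ))) := by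
        rw [sq, ENNReal.ofReal_mul (sub_pos.2 hT1).le, mul_assoc]
    _ ≤ ENNReal.ofReal (1 - T) * ((1 - ENNReal.ofReal T)⁻¹ * G) := by gcongr
    _ = G := by rw [← mul_assoc, hinv, one_mul]

lemma integral_sq_div_rpow_le {g g' : ℝ → ℝ} {ε a : ℝ} (σ : ℝ) (hε : 0 < ε) (hεa : ε ≤ a)
    (hg : ∀ x ∈ Icc ε a, HasDerivAt g (g' x) x) (hg' : ContinuousOn g' (Icc ε a)) :
    σ / 2 * ∫ x in ε..a, g x ^ 2 / x ^ (1 + σ) ≤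
      g ε ^ 2 / (2 * ε ^ σ) + ∫ x in ε..a, g x * g' x / x ^ σ := by
  have hpos : ∀ x ∈ Icc ε a, 0 < x := fun x hx => hε.trans_le hx.1
  have hgc : ContinuousOn g (Icc ε a) := fun x hx => (hg x hx).continuousAt.continuousWithinAt
  have hpow : ∀ s : ℝ, ContinuousOn (fun x : ℝ => x ^ s) (Icc ε a) := fun s =>
    continuousOn_id.rpow_const fun x hx => Or.inl (hpos x hx).ne'
  have hne : ∀ s : ℝ, ∀ x ∈ Icc ε a, x ^ s ≠ 0 := fun s x hx => (rpow_pos_of_pos (hpos x hx) s).ne'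
  have hint1 : IntervalIntegrable (fun x => g x * g' x / x ^ σ) volume ε a :=
    ((hgc.mul hg').div (hpow σ) (hne σ)).intervalIntegrable_of_Icc hεa
  have hint2 : IntervalIntegrable (fun x => σ / 2 * (g x ^ 2 / x ^ (1 + σ))) volume ε a :=
    (continuousOn_const.mul ((hgc.pow 2).div (hpow _) (hne _))).intervalIntegrable_of_Icc hεa
  have hderiv : ∀ x ∈ uIcc ε a, HasDerivAt (fun y => g y ^ 2 / (2 * y ^ σ))
      (g x * g' x / x ^ σ - σ / 2 * (g x ^ 2 / x ^ (1 + σ))) x := by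
    rw [uIcc_of_le hεa]
    intro x hx
    have hx0 := hpos x hx
    refine (((hg x hx).pow 2).div ((hasDerivAt_rpow_const (Or.inl hx0.ne')).const_mul 2)
      (by positivity)).congr_deriv ?_
    simp only [rpow_sub hx0, rpow_add hx0, rpow_one, Pi.pow_apply]
    field_simp
    ring
  have hftc := intervalIntegral.integral_eq_sub_of_hasDerivAt hderiv (hint1.sub hint2)
  rw [intervalIntegral.integral_sub hint1 hint2, intervalIntegral.integral_const_mul] at hftc
  have : 0 ≤ g a ^ 2 / (2 * a ^ σ) := by
    have := rpow_pos_of_pos (hε.trans_le hεa) σ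
    positivity
  linarith

section

variable {f f' : ℝ → ℝ} {a q σ : ℝ}

lemma Ioc_subset_Ioc_mul (hq : 1 ≤ q) : Ioc 0 a ⊆ Ioc 0 (q * a) :=
  fun _ hx => ⟨hx.1, hx.2.trans (le_mul_of_one_le_left (hx.1.le.trans hx.2) hq)⟩

lemma div_mem_Ioc {x : ℝ} (hq : 1 < q) (hx : x ∈ Ioc 0 a) : x / q ∈ Ioc 0 a :=
  ⟨div_pos hx.1 (by linarith), (div_le_self hx.1.le hq.le).trans hx.2⟩

lemma mul_mem_Ioc_mul {x : ℝ} (hq : 1 < q) (hx : x ∈ Ioc 0 a) : q * x ∈ Ioc 0 (q * a) :=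
  ⟨mul_pos (by linarith) hx.1, mul_le_mul_of_nonneg_left hx.2 (by linarith)⟩

lemma MonotoneOn.apply_div_le_apply_le_apply_mul (hmono : MonotoneOn f (Ioc 0 (q * a)))
    (hq : 1 < q) {x : ℝ} (hx : x ∈ Ioc 0 a) : f (x / q) ≤ f x ∧ f x ≤ f (q * x) :=
  ⟨hmono (Ioc_subset_Ioc_mul hq.le (div_mem_Ioc hq hx)) (Ioc_subset_Ioc_mul hq.le hx)
      (div_le_self hx.1.le hq.le),
    hmono (Ioc_subset_Ioc_mul hq.le hx) (mul_mem_Ioc_mul hq hx)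
      (le_mul_of_one_le_left hx.1.le hq.le)⟩

lemma continuousOn_mul_deriv_div_rpow (hf : Continuous f) (hf' : ContinuousOn f' (Ioc 0 a))
    {δ : ℝ} (hδ : 0 < δ) :
    ContinuousOn (fun x => (f (q * x) - f (x / q)) * f' x / x ^ σ) (Icc δ a) := by
  have hpos : ∀ x ∈ Icc δ a, 0 < x := fun x hx => hδ.trans_le hx.1
  exact (((by fun_prop : Continuous fun x => f (q * x) - f (x / q)).continuousOn).mul
    (hf'.mono fun x hx => ⟨hpos x hx, hx.2⟩)).div
    (continuousOn_id.rpow_const fun x hx => Or.inl (hpos x hx).ne')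
    fun x hx => (rpow_pos_of_pos (hpos x hx) σ).ne'

lemma sq_sub_div_rpow_le_integral (hq : 1 < q) (hσ : 0 ≤ σ) (hf : Continuous f)
    (hf' : ∀ x ∈ Ioc 0 a, HasDerivAt f (f' x) x) (hf'c : ContinuousOn f' (Ioc 0 a))
    (hf'0 : ∀ x ∈ Ioc 0 a, 0 ≤ f' x) (hmono : MonotoneOn f (Ioc 0 (q * a)))
    {ε : ℝ} (hε : ε ∈ Ioc 0 a) :
    (f ε - f (ε / q)) ^ 2 / ε ^ σ ≤
      ∫ x in ε / q..ε, (f (q * x) - f (x / q)) * f' x / x ^ σ := by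
  have hq0 : 0 < q := by linarith
  have hεq : ε / q ≤ ε := div_le_self hε.1.le hq.le
  have hwin : Icc (ε / q) ε ⊆ Ioc 0 a := fun x hx =>
    ⟨(div_pos hε.1 hq0).trans_le hx.1, hx.2.trans hε.2⟩
  have hftc : ∫ x in ε / q..ε, f' x = f ε - f (ε / q) :=
    intervalIntegral.integral_eq_sub_of_hasDerivAt
      (by rw [uIcc_of_le hεq]; exact fun x hx => hf' x (hwin hx))
      ((hf'c.mono hwin).intervalIntegrable_of_Icc hεq)
  have hgε : 0 ≤ f ε - f (ε / q) := sub_nonneg.2 (hmono.apply_div_le_apply_le_apply_mul hq hε).1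
  calc (f ε - f (ε / q)) ^ 2 / ε ^ σ = ∫ x in ε / q..ε, (f ε - f (ε / q)) / ε ^ σ * f' x := by
        rw [intervalIntegral.integral_const_mul, hftc]; ring
    _ ≤ _ := by
      refine intervalIntegral.integral_mono_on hεq
        ((continuousOn_const.mul (hf'c.mono hwin)).intervalIntegrable_of_Icc hεq)
        ((continuousOn_mul_deriv_div_rpow hf hf'c (div_pos hε.1 hq0)).mono
          (Icc_subset_Icc_right hε.2) |>.intervalIntegrable_of_Icc hεq) fun x hx => ?_
      have hxa := hwin hx
      have hgx : f ε - f (ε / q) ≤ f (q * x) - f (x / q) := by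
        have h1 : f ε ≤ f (q * x) := hmono (Ioc_subset_Ioc_mul hq.le hε) (mul_mem_Ioc_mul hq hxa)
          (by rw [← div_le_iff₀' hq0]; exact hx.1)
        have h2 : f (x / q) ≤ f (ε / q) := hmono (Ioc_subset_Ioc_mul hq.le (div_mem_Ioc hq hxa))
          (Ioc_subset_Ioc_mul hq.le (div_mem_Ioc hq hε)) (div_le_div_of_nonneg_right hx.2 hq0.le)
        linarith
      rw [mul_div_right_comm]
      gcongr ?_ * f' x
      · exact hf'0 x hxa
      · exact div_le_div₀ (hgε.trans hgx) hgx (rpow_pos_of_pos hxa.1 σ)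
          (rpow_le_rpow hxa.1.le hx.2 hσ)

lemma sub_mul_sub_le_sub_mul_deriv (hq : 1 < q) (hf'0 : ∀ x ∈ Ioc 0 a, 0 ≤ f' x)
    (hmono : MonotoneOn f (Ioc 0 (q * a))) {x : ℝ} (hx : x ∈ Ioc 0 a) :
    (f x - f (x / q)) * (f' x - f' (x / q) / q) ≤ (f (q * x) - f (x / q)) * f' x := by
  obtain ⟨hdiv, hmul⟩ := hmono.apply_div_le_apply_le_apply_mul hq hx
  have hg' : f' x - f' (x / q) / q ≤ f' x :=
    sub_le_self _ (div_nonneg (hf'0 _ (div_mem_Ioc hq hx)) (by linarith))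
  calc (f x - f (x / q)) * (f' x - f' (x / q) / q) ≤ (f x - f (x / q)) * f' x := by
        gcongr
    _ ≤ (f (q * x) - f (x / q)) * f' x := by gcongr; exact hf'0 x hx

lemma integral_sq_sub_div_rpow_le (hq : 1 < q) (hσ : 0 ≤ σ) (hf : Continuous f)
    (hf' : ∀ x ∈ Ioc 0 a, HasDerivAt f (f' x) x) (hf'c : ContinuousOn f' (Ioc 0 a))
    (hf'0 : ∀ x ∈ Ioc 0 a, 0 ≤ f' x) (hmono : MonotoneOn f (Ioc 0 (q * a)))
    {ε : ℝ} (hε : ε ∈ Ioc 0 a) :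
    σ / 2 * ∫ x in ε..a, (f x - f (x / q)) ^ 2 / x ^ (1 + σ) ≤
      ∫ x in ε / q..a, (f (q * x) - f (x / q)) * f' x / x ^ σ := by
  have hq0 : 0 < q := by linarith
  have hεa : Icc ε a ⊆ Ioc 0 a := fun x hx => ⟨hε.1.trans_le hx.1, hx.2⟩
  have hg : ∀ x ∈ Icc ε a, HasDerivAt (fun y => f y - f (y / q)) (f' x - f' (x / q) / q) x :=
    fun x hx => ((hf' x (hεa hx)).sub ((hf' _ (div_mem_Ioc hq (hεa hx))).comp x
      ((hasDerivAt_id x).div_const q))).congr_deriv (by simp [div_eq_mul_inv])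
  have hg'c : ContinuousOn (fun x => f' x - f' (x / q) / q) (Icc ε a) :=
    (hf'c.mono hεa).sub ((hf'c.comp (continuousOn_id.div_const q)
      fun x hx => div_mem_Ioc hq (hεa hx)).div_const q)
  have hW := continuousOn_mul_deriv_div_rpow (σ := σ) (q := q) hf hf'c hε.1
  have hcompare : ∫ x in ε..a, (f x - f (x / q)) * (f' x - f' (x / q) / q) / x ^ σ ≤
      ∫ x in ε..a, (f (q * x) - f (x / q)) * f' x / x ^ σ :=
    intervalIntegral.integral_mono_on hε.2
      ((((by fun_prop : Continuous fun x => f x - f (x / q)).continuousOn.mul hg'c).div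
        (continuous_rpow_const hσ).continuousOn
        fun x hx => (rpow_pos_of_pos (hεa hx).1 σ).ne').intervalIntegrable_of_Icc hε.2)
      (hW.intervalIntegrable_of_Icc hε.2) fun x hx =>
      div_le_div_of_nonneg_right (sub_mul_sub_le_sub_mul_deriv hq hf'0 hmono (hεa hx))
        (rpow_nonneg (hεa hx).1.le σ)
  have hsplit := intervalIntegral.integral_add_adjacent_intervals
    (((continuousOn_mul_deriv_div_rpow hf hf'c (div_pos hε.1 hq0)).mono
      (Icc_subset_Icc_right hε.2)).intervalIntegrable_of_Icc (μ := volume)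
        (div_le_self hε.1.le hq.le))
    (hW.intervalIntegrable_of_Icc hε.2)
  have hhalf : (f ε - f (ε / q)) ^ 2 / (2 * ε ^ σ) ≤ (f ε - f (ε / q)) ^ 2 / ε ^ σ := by
    have := rpow_pos_of_pos hε.1 σ
    gcongr
    linarith
  linarith [integral_sq_div_rpow_le σ hε.1 hε.2 hg hg'c,
    sq_sub_div_rpow_le_integral hq hσ hf hf' hf'c hf'0 hmono hε]

theorem ofReal_mul_setLIntegral_sq_sub_div_rpow_le (hq : 1 < q) (hσ : 0 ≤ σ) (hf : Continuous f)
    (hf' : ∀ x ∈ Ioc 0 a, HasDerivAt f (f' x) x) (hf'c : ContinuousOn f' (Ioc 0 a))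
    (hf'0 : ∀ x ∈ Ioc 0 a, 0 ≤ f' x) (hmono : MonotoneOn f (Ioc 0 (q * a))) :
    ENNReal.ofReal (σ / 2) *
        ∫⁻ x in Ioc 0 a, ENNReal.ofReal ((f x - f (x / q)) ^ 2 / x ^ (1 + σ)) ≤
      ∫⁻ x in Ioc 0 a, ENNReal.ofReal ((f (q * x) - f (x / q)) * f' x / x ^ σ) := by
  have hq0 : 0 < q := by linarith
  rw [← lintegral_const_mul' _ _ ENNReal.ofReal_ne_top]
  refine setLIntegral_Ioc_le_of_forall_pos fun ε hε => ?_
  have hεq : 0 < ε / q := div_pos hε.1 hq0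
  have hW0 : ∀ x ∈ Ioc (ε / q) a, 0 ≤ (f (q * x) - f (x / q)) * f' x / x ^ σ := fun x hx => by
    have hxa : x ∈ Ioc 0 a := ⟨hεq.trans hx.1, hx.2⟩
    obtain ⟨hdiv, hmul⟩ := hmono.apply_div_le_apply_le_apply_mul hq hxa
    exact div_nonneg (mul_nonneg (by linarith) (hf'0 x hxa)) (rpow_nonneg hxa.1.le σ)
  calc ∫⁻ x in Ioc ε a, ENNReal.ofReal (σ / 2) *
          ENNReal.ofReal ((f x - f (x / q)) ^ 2 / x ^ (1 + σ))
      = ENNReal.ofReal (σ / 2 * ∫ x in ε..a, (f x - f (x / q)) ^ 2 / x ^ (1 + σ)) := by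
        rw [lintegral_const_mul' _ _ ENNReal.ofReal_ne_top, ENNReal.ofReal_mul (by linarith),
          ofReal_intervalIntegral_eq_setLIntegral
            (F := fun x => (f x - f (x / q)) ^ 2 / x ^ (1 + σ)) hε.2
            ((by fun_prop : Continuous fun x => (f x - f (x / q)) ^ 2).continuousOn.div
              (continuous_rpow_const (by linarith)).continuousOn
              fun x hx => (rpow_pos_of_pos (hε.1.trans_le hx.1) _).ne')
            fun x hx => div_nonneg (sq_nonneg _) (rpow_nonneg (hε.1.trans hx.1).le _)]
    _ ≤ ENNReal.ofReal (∫ x in ε / q..a, (f (q * x) - f (x / q)) * f' x / x ^ σ) :=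
        ENNReal.ofReal_le_ofReal (integral_sq_sub_div_rpow_le hq hσ hf hf' hf'c hf'0 hmono hε)
    _ = ∫⁻ x in Ioc (ε / q) a, ENNReal.ofReal ((f (q * x) - f (x / q)) * f' x / x ^ σ) :=
        ofReal_intervalIntegral_eq_setLIntegral ((div_le_self hε.1.le hq.le).trans hε.2)
          (continuousOn_mul_deriv_div_rpow hf hf'c hεq) hW0
    _ ≤ _ := lintegral_mono_set (Ioc_subset_Ioc_left hεq.le)

end

theorem ofReal_mul_setLIntegral_sq_div_rpow_le_of_contDiffOn {f : ℝ → ℝ} {a q σ : ℝ}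
    (hq : 1 < q) (hσ : 0 < σ) (ha : 0 < a) (hf : ContDiffOn ℝ 1 f (Icc 0 (q * a)))
    (hf0 : f 0 = 0) (hf'0 : ∀ x ∈ Icc 0 (q * a), 0 ≤ derivWithin f (Icc 0 (q * a)) x) :
    ENNReal.ofReal (σ / 2 * (1 - q ^ (-(σ / 2))) ^ 2) *
        ∫⁻ x in Ioc 0 a, ENNReal.ofReal (f x ^ 2 / x ^ (1 + σ)) ≤
      ∫⁻ x in Ioc 0 a, ENNReal.ofReal
        ((f (q * x) - f (x / q)) * derivWithin f (Icc 0 (q * a)) x / x ^ σ) := by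
  set f' := derivWithin f (Icc 0 (q * a))
  have hsub : Ioc 0 a ⊆ Ioo 0 (q * a) := fun x hx =>
    ⟨hx.1, hx.2.trans_lt (lt_mul_of_one_lt_left (hx.1.trans_le hx.2) hq)⟩
  have hmem : ∀ x ∈ Ioc 0 a, x ∈ Icc 0 (q * a) := fun x hx => Ioo_subset_Icc_self (hsub hx)
  -- Extending `f` constantly outside `[0, q a]` makes it continuous on `ℝ`, as the bounds need.
  obtain ⟨F, hFc, hFf, hF'⟩ :=
    (hf.differentiableOn one_ne_zero).exists_continuous_eqOn_hasDerivAt (by positivity)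
  have hmono : MonotoneOn F (Icc 0 (q * a)) := monotoneOn_of_hasDerivWithinAt_nonneg
    (convex_Icc _ _) hFc.continuousOn
    (by simpa only [interior_Icc] using fun x hx => (hF' x hx).hasDerivWithinAt)
    (by simpa only [interior_Icc] using fun x hx => hf'0 x (Ioo_subset_Icc_self hx))
  have hlhs : ∫⁻ x in Ioc 0 a, ENNReal.ofReal (f x ^ 2 / x ^ (1 + σ)) =
      ∫⁻ x in Ioc 0 a, ENNReal.ofReal (F x ^ 2 / x ^ (1 + σ)) :=
    setLIntegral_congr_fun measurableSet_Ioc fun x hx => by rw [hFf (hmem x hx)]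
  have hrhs : ∫⁻ x in Ioc 0 a, ENNReal.ofReal ((f (q * x) - f (x / q)) * f' x / x ^ σ) =
      ∫⁻ x in Ioc 0 a, ENNReal.ofReal ((F (q * x) - F (x / q)) * f' x / x ^ σ) :=
    setLIntegral_congr_fun measurableSet_Ioc fun x hx => by
      rw [hFf (Ioc_subset_Icc_self (mul_mem_Ioc_mul hq hx)),
        hFf (Ioc_subset_Icc_self (Ioc_subset_Ioc_mul hq.le (div_mem_Ioc hq hx)))]
  rw [hlhs, hrhs, ENNReal.ofReal_mul (by positivity), mul_assoc]
  calc _ ≤ ENNReal.ofReal (σ / 2) *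
        ∫⁻ x in Ioc 0 a, ENNReal.ofReal ((F x - F (x / q)) ^ 2 / x ^ (1 + σ)) := by
        gcongr
        exact ofReal_sq_mul_setLIntegral_sq_div_rpow_le_sq_sub a hq hσ hFc
          (by rw [hFf (left_mem_Icc.2 (by positivity)), hf0])
    _ ≤ _ := ofReal_mul_setLIntegral_sq_sub_div_rpow_le hq hσ.le hFc (fun x hx => hF' x (hsub hx))
        ((hf.continuousOn_derivWithin (uniqueDiffOn_Icc (mul_pos (by linarith) ha)) le_rfl).mono
          hmem)
        (fun x hx => hf'0 x (hmem x hx)) (hmono.mono Ioc_subset_Icc_self)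

theorem key_integral_inequality (σ q : ℝ) (hσ : 0 < σ) (hq : q ∈ Set.Ioo 1 2) :
    ∃ C > (0:ℝ), ∀ f : ℝ → ℝ,
      ContDiffOn ℝ 1 f (Set.Icc 0 (q * π / 2)) →
      (∀ x ∈ Set.Icc 0 (q * π / 2), 0 ≤ f x) →
      f 0 = 0 →
      (∀ x ∈ Set.Icc 0 (q * π / 2), 0 ≤ derivWithin f (Set.Icc 0 (q * π / 2)) x) →
      ENNReal.ofReal C * ∫⁻ x in Set.Ioc (0:ℝ) (π / 2),
          ENNReal.ofReal (f x ^ 2 / x ^ (1 + σ)) ≤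
        ∫⁻ x in Set.Ioc (0:ℝ) (π / 2),
          ENNReal.ofReal ((f (q * x) - f (x / q)) *
            derivWithin f (Set.Icc 0 (q * π / 2)) x / x ^ σ) := by
  obtain ⟨hq1, -⟩ := hq
  have hT : 0 < 1 - q ^ (-(σ / 2)) := sub_pos.2 (rpow_lt_one_of_one_lt_of_neg hq1 (by linarith))
  refine ⟨σ / 2 * (1 - q ^ (-(σ / 2))) ^ 2, by positivity, fun f hf _ hf0 hf'0 => ?_⟩
  rw [mul_div_assoc] at hf hf'0 ⊢
  exact ofReal_mul_setLIntegral_sq_div_rpow_le_of_contDiffOn hq1 hσ pi_div_two_pos hf hf0 hf'0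
end
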